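/- arXiv:1703.01764 — 4 statements merged into one kernel-verified Lean document; each statement's English description precedes it below -/
import Mathlib

section
/- Let G be a group without involutions (no element of order 2) in which the squaring map is bijective, and let σ be an automorphism of G with σ² = id. Then every element g ∈ G can be written uniquely as g = f·i where σ(f) = f and σ(i) = i⁻¹. -/
/-! The factor `i` of `g = f * i` is forced: `(σ g)⁻¹ * g = i * i`, so `i` is the unique
square root of `(σ g)⁻¹ * g`, and `f = g * i⁻¹`. Conversely, for that square root `i`,
applying `σ` shows that `σ i` is a square root of `(i * i)⁻¹`, hence `σ i = i⁻¹`, and then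
`g * i⁻¹` is `σ`-fixed. -/

open Function

section Involution

variable {G F : Type*} [Group G] [FunLike F G G] [MonoidHomClass F G G] (σ : F)

lemma inv_map_mul_self_of_fixed_mul_inverted {f i : G} (hf : σ f = f) (hi : σ i = i⁻¹) :
    (σ (f * i))⁻¹ * (f * i) = i * i := by
  rw [map_mul, hf, hi]
  group

lemma map_eq_inv_of_mul_self_eq (hσ : ∀ g, σ (σ g) = g) (hsq : Injective fun x : G => x * x)
    {g i : G} (hi : i * i = (σ g)⁻¹ * g) : σ i = i⁻¹ := by
  apply hsq
  calc σ i * σ i = σ ((σ g)⁻¹ * g) := by rw [← map_mul, hi]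
    _ = ((σ g)⁻¹ * g)⁻¹ := by rw [map_mul, map_inv, hσ, mul_inv_rev, inv_inv]
    _ = i⁻¹ * i⁻¹ := by rw [← hi, mul_inv_rev]

theorem existsUnique_fixed_mul_inverted (hσ : ∀ g, σ (σ g) = g)
    (hsq : Bijective fun x : G => x * x) (g : G) :
    ∃! p : G × G, σ p.1 = p.1 ∧ σ p.2 = p.2⁻¹ ∧ g = p.1 * p.2 := by
  obtain ⟨i, hi : i * i = _⟩ := hsq.2 ((σ g)⁻¹ * g)
  have hσi : σ i = i⁻¹ := map_eq_inv_of_mul_self_eq σ hσ hsq.1 hi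
  refine ⟨(g * i⁻¹, i), ⟨?_, hσi, by simp⟩, ?_⟩
  · have hσg : σ g = g * (i * i)⁻¹ := by rw [hi]; group
    rw [map_mul, map_inv, hσi, hσg]
    group
  · rintro ⟨f, j⟩ ⟨hf, hj, rfl⟩
    have hji : j = i :=
      hsq.1 <| (inv_map_mul_self_of_fixed_mul_inverted σ hf hj).symm.trans hi.symm
    subst hji
    simp

end Involution

theorem stmt_1_general {G : Type*} [Group G]
    (hsq : Function.Bijective (fun x : G => x * x))
    (σ : G ≃* G) (hinv : ∀ g : G, σ (σ g) = g) :
    ∀ g : G, ∃! p : G × G, σ p.1 = p.1 ∧ σ p.2 = p.2⁻¹ ∧ g = p.1 * p.2 :=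
  existsUnique_fixed_mul_inverted σ hinv hsq

theorem stmt_1 {G : Type*} [Group G]
    (hnoinv : ∀ g : G, g * g = 1 → g = 1)
    (hsq : Function.Bijective (fun x : G => x * x))
    (σ : G ≃* G) (hinv : ∀ g : G, σ (σ g) = g) :
    ∀ g : G, ∃! p : G × G, σ p.1 = p.1 ∧ σ p.2 = p.2⁻¹ ∧ g = p.1 * p.2 :=
  stmt_1_general hsq σ hinv
end

section
/- In a group G with a nontrivial malnormal subgroup B whose conjugates cover G, if i and j are involutions of G with ij ≠ 1 and B' is the unique conjugate of B containing ij, then i, j ∈ N_G(B') = B'. -/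
def Malnormal {G : Type*} [Group G] (B : Subgroup G) : Prop :=
  ∀ g : G, g ∉ B → ∀ x ∈ B, g⁻¹ * x * g ∈ B → x = 1

lemma malnormal_conj {G : Type*} [Group G] {B : Subgroup G} (hmal : Malnormal B) (c : G) :
    Malnormal (B.map (MulAut.conj c).toMonoidHom) := by
  intro g hg x hx hcon
  rw [Subgroup.mem_map_equiv] at hx hcon
  simp only [MulAut.conj_symm_apply] at hx hcon
  have hg' : c⁻¹ * g * c ∉ B := by
    intro h
    refine hg ?_
    rw [Subgroup.mem_map_equiv]
    simp only [MulAut.conj_symm_apply]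
    simpa [mul_assoc] using h
  have := hmal (c⁻¹ * g * c) hg' (c⁻¹ * x * c) hx (by
    convert hcon using 1
    group)
  have hx1 : x = 1 := by
    have : c * (c⁻¹ * x * c) * c⁻¹ = c * 1 * c⁻¹ := by rw [this]
    simpa [mul_assoc] using this
  exact hx1

lemma key_lemma {G : Type*} [Group G] (B' : Subgroup G) (hmal : Malnormal B')
    (i j : G) (hi : i * i = 1) (hj : j * j = 1) (hij : i * j ≠ 1)
    (hmem : i * j ∈ B') : (i ∈ B' ∧ j ∈ B') ∧ Subgroup.normalizer (B' : Set G) = B' := by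
  have hiinv : i⁻¹ = i := by
    exact inv_eq_of_mul_eq_one_left hi
  have hconj : i⁻¹ * (i * j) * i = (i * j)⁻¹ := by
    rw [hiinv]
    rw [mul_inv_rev]
    have hjinv : j⁻¹ = j := inv_eq_of_mul_eq_one_left hj
    rw [hjinv, hiinv]
    calc i * (i * j) * i = (i * i) * (j * i) := by group
      _ = j * i := by rw [hi, one_mul]
  have hiB : i ∈ B' := by
    by_contra hiB
    exact hij (hmal i hiB (i * j) hmem (hconj ▸ inv_mem hmem))
  have hjB : j ∈ B' := by
    have : i⁻¹ * (i * j) ∈ B' := mul_mem (inv_mem hiB) hmem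
    simpa [mul_assoc, hiinv, ← mul_assoc, hi] using this
  refine ⟨⟨hiB, hjB⟩, le_antisymm ?_ Subgroup.le_normalizer⟩
  intro g hg
  by_contra hgB
  have hginv : g⁻¹ ∈ Subgroup.normalizer (B' : Set G) := inv_mem hg
  rw [Subgroup.mem_normalizer_iff] at hginv
  have : g⁻¹ * (i * j) * g ∈ B' := by
    have := (hginv (i * j)).mp hmem
    simpa using this
  exact hij (hmal g hgB (i * j) hmem this)

theorem stmt_9 {G : Type*} [Group G] (B : Subgroup G)
    (hB : B ≠ ⊥) (hmal : Malnormal B)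
    (hcover : ∀ g : G, ∃ h : G, h⁻¹ * g * h ∈ B)
    (i j : G) (hi : i * i = 1) (hi1 : i ≠ 1) (hj : j * j = 1) (hj1 : j ≠ 1)
    (hij : i * j ≠ 1)
    (B' : Subgroup G) (c : G)
    (hB' : B' = B.map (MulAut.conj c).toMonoidHom)
    (hmem : i * j ∈ B') :
    (i ∈ B' ∧ j ∈ B') ∧ Subgroup.normalizer (B' : Set G) = B' := by
  subst hB'
  exact key_lemma _ (malnormal_conj hmal c) i j hi hj hij hmem
end

section
/- A group G possessing a nontrivial proper malnormal subgroup B whose conjugates cover G (a full Frobenius group) contains no involutions. -/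
namespace Malnormal

variable {G : Type*} [Group G] {B : Subgroup G}

theorem mem_of_conj_mem (hmal : Malnormal B) {x g : G} (hx : x ∈ B) (hx1 : x ≠ 1)
    (hg : g⁻¹ * x * g ∈ B) : g ∈ B :=
  by_contra fun hgB => hx1 (hmal g hgB x hx hg)

theorem conj_mem_of_conj_eq_inv (hmal : Malnormal B) {x g k : G} (hx : k⁻¹ * x * k ∈ B)
    (hx1 : x ≠ 1) (hg : g⁻¹ * x * g = x⁻¹) : k⁻¹ * g * k ∈ B := by
  refine hmal.mem_of_conj_mem hx (by simpa [mul_assoc, inv_mul_eq_one] using hx1) ?_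
  have hconj : (k⁻¹ * g * k)⁻¹ * (k⁻¹ * x * k) * (k⁻¹ * g * k) = (k⁻¹ * x * k)⁻¹ := by
    calc (k⁻¹ * g * k)⁻¹ * (k⁻¹ * x * k) * (k⁻¹ * g * k) = k⁻¹ * (g⁻¹ * x * g) * k := by group
      _ = (k⁻¹ * x * k)⁻¹ := by rw [hg]; group
  exact hconj ▸ B.inv_mem hx

theorem eq_one_of_mul_self_eq_one (hmal : Malnormal B) (hBtop : B ≠ ⊤)
    (hcover : ∀ g : G, ∃ k : G, k⁻¹ * g * k ∈ B) {u : G} (huB : u ∈ B) (hu : u * u = 1) :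
    u = 1 := by
  by_contra hu1
  obtain ⟨a, haB⟩ := SetLike.exists_not_mem_of_ne_top B hBtop
  obtain ⟨s, hs_def⟩ : ∃ s, a⁻¹ * u * a = s := ⟨_, rfl⟩
  have hsB : s ∉ B := fun hs => haB (hmal.mem_of_conj_mem huB hu1 (hs_def ▸ hs))
  have hu_inv : u⁻¹ = u := (mul_eq_one_iff_eq_inv.mp hu).symm
  have hs_inv : s⁻¹ = s := by
    calc s⁻¹ = a⁻¹ * u⁻¹ * a := by rw [← hs_def]; group
      _ = s := by rw [hu_inv, hs_def]
  have hx1 : u * s ≠ 1 := fun h => hsB (inv_eq_of_mul_eq_one_right h ▸ B.inv_mem huB)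
  have hx_inv : (u * s)⁻¹ = s * u := by rw [mul_inv_rev, hs_inv, hu_inv]
  have hux : u⁻¹ * (u * s) * u = (u * s)⁻¹ := by rw [hx_inv]; group
  have hsx : s⁻¹ * (u * s) * s = (u * s)⁻¹ := by
    calc s⁻¹ * (u * s) * s = s * u * (s⁻¹ * s) := by rw [hs_inv]; group
      _ = (u * s)⁻¹ := by rw [hx_inv]; group
  obtain ⟨k, hk⟩ := hcover (u * s)
  have hkB : k ∈ B := hmal.mem_of_conj_mem huB hu1 (hmal.conj_mem_of_conj_eq_inv hk hx1 hux)
  have hks : k⁻¹ * s * k ∈ B := hmal.conj_mem_of_conj_eq_inv hk hx1 hsx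
  refine hsB ?_
  have hs : s = k * (k⁻¹ * s * k) * k⁻¹ := by group
  exact hs ▸ B.mul_mem (B.mul_mem hkB hks) (B.inv_mem hkB)

end Malnormal

theorem stmt_10_general {G : Type*} [Group G] (B : Subgroup G)
    (hBtop : B ≠ ⊤) (hmal : Malnormal B)
    (hcover : ∀ g : G, ∃ h : G, h⁻¹ * g * h ∈ B) :
    ∀ g : G, g * g = 1 → g = 1 := by
  intro t ht
  obtain ⟨h, hth⟩ := hcover t
  have hsq : (h⁻¹ * t * h) * (h⁻¹ * t * h) = 1 := by
    calc (h⁻¹ * t * h) * (h⁻¹ * t * h) = h⁻¹ * (t * t) * h := by group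
      _ = 1 := by rw [ht]; group
  simpa [mul_assoc, inv_mul_eq_one] using hmal.eq_one_of_mul_self_eq_one hBtop hcover hth hsq

theorem stmt_10 {G : Type*} [Group G] (B : Subgroup G)
    (hB : B ≠ ⊥) (hBtop : B ≠ ⊤) (hmal : Malnormal B)
    (hcover : ∀ g : G, ∃ h : G, h⁻¹ * g * h ∈ B) :
    ∀ g : G, g * g = 1 → g = 1 :=
  stmt_10_general B hBtop hmal hcover
end

section
/- Let G be a group and B a nontrivial malnormal subgroup whose conjugates cover G. Then any two distinct lines (double translates gBh⁻¹) intersect in at most one point, and any two distinct points x, y ∈ G lie on a unique common line, namely x·B' where B' is the conjugate of B containing x⁻¹y. -/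
/-- A line is a double translate `gBh⁻¹` of the subgroup `B`. -/
def IsLine {G : Type*} [Group G] (B : Subgroup G) (L : Set G) : Prop :=
  ∃ g h : G, L = (fun b : G => g * b * h⁻¹) '' (B : Set G)

section

variable {G : Type*} [Group G] {B : Subgroup G}

theorem Malnormal.inv_mul_mem_of_conj_mem (hmal : Malnormal B) {c d z : G} (hz : z ≠ 1)
    (hc : c⁻¹ * z * c ∈ B) (hd : d⁻¹ * z * d ∈ B) : c⁻¹ * d ∈ B := by
  by_contra hcd
  have hconj : (c⁻¹ * d)⁻¹ * (c⁻¹ * z * c) * (c⁻¹ * d) = d⁻¹ * z * d := by group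
  have h1 := hmal (c⁻¹ * d) hcd (c⁻¹ * z * c) hc (hconj ▸ hd)
  exact hz (calc z = c * (c⁻¹ * z * c) * c⁻¹ := by group
    _ = 1 := by rw [h1]; group)

/-- The line `x · cBc⁻¹`. -/
def lineThrough (B : Subgroup G) (x c : G) : Set G :=
  {z | c⁻¹ * (x⁻¹ * z) * c ∈ B}

theorem mem_lineThrough {x c z : G} : z ∈ lineThrough B x c ↔ c⁻¹ * (x⁻¹ * z) * c ∈ B :=
  Iff.rfl

theorem mem_lineThrough_self (x c : G) : x ∈ lineThrough B x c := by
  simp [mem_lineThrough]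

theorem isLine_lineThrough (x c : G) : IsLine B (lineThrough B x c) := by
  refine ⟨x * c, c, Set.ext fun z => ⟨fun hz => ⟨_, hz, by group⟩, ?_⟩⟩
  rintro ⟨b, hb, rfl⟩
  rw [mem_lineThrough, SetLike.mem_coe] at *
  convert hb using 1
  group

theorem IsLine.exists_eq_lineThrough {L : Set G} (hL : IsLine B L) {x : G} (hx : x ∈ L) :
    ∃ c, L = lineThrough B x c := by
  obtain ⟨g, h, rfl⟩ := hL
  obtain ⟨b₀, hb₀, rfl⟩ := hx
  refine ⟨h * b₀⁻¹, Set.ext fun z => ⟨?_, fun hz => ⟨g⁻¹ * z * h, SetLike.mem_coe.mpr ?_, by group⟩⟩⟩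
  · rintro ⟨b, hb, rfl⟩
    rw [mem_lineThrough]
    convert B.mul_mem hb (B.inv_mem hb₀) using 1
    group
  · convert B.mul_mem (mem_lineThrough.mp hz) hb₀ using 1
    group

theorem lineThrough_eq_of_inv_mul_mem {c d : G} (hcd : c⁻¹ * d ∈ B) (x : G) :
    lineThrough B x c = lineThrough B x d := by
  have key : ∀ {c d : G}, c⁻¹ * d ∈ B → ∀ w, c⁻¹ * w * c ∈ B → d⁻¹ * w * d ∈ B := by
    intro c d hcd w hw
    convert B.mul_mem (B.mul_mem (B.inv_mem hcd) hw) hcd using 1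
    group
  have hdc : d⁻¹ * c ∈ B := by simpa using B.inv_mem hcd
  ext z
  exact ⟨key hcd _, key hdc _⟩

theorem Malnormal.lineThrough_eq (hmal : Malnormal B) {x y c d : G} (hxy : x ≠ y)
    (hc : y ∈ lineThrough B x c) (hd : y ∈ lineThrough B x d) :
    lineThrough B x c = lineThrough B x d :=
  lineThrough_eq_of_inv_mul_mem
    (hmal.inv_mul_mem_of_conj_mem (fun h => hxy (inv_mul_eq_one.mp h)) hc hd) x

theorem Malnormal.existsUnique_isLine (hmal : Malnormal B)
    (hcover : ∀ g : G, ∃ h : G, h⁻¹ * g * h ∈ B) {x y : G} (hxy : x ≠ y) :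
    ∃! L : Set G, IsLine B L ∧ x ∈ L ∧ y ∈ L := by
  obtain ⟨c, hc⟩ := hcover (x⁻¹ * y)
  refine ⟨lineThrough B x c, ⟨isLine_lineThrough x c, mem_lineThrough_self x c, hc⟩, ?_⟩
  rintro L ⟨hL, hxL, hyL⟩
  obtain ⟨d, rfl⟩ := hL.exists_eq_lineThrough hxL
  exact hmal.lineThrough_eq hxy hyL hc

end

theorem stmt_14_general {G : Type*} [Group G] (B : Subgroup G)
    (hmal : Malnormal B)
    (hcover : ∀ g : G, ∃ h : G, h⁻¹ * g * h ∈ B) :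
    (∀ L L' : Set G, IsLine B L → IsLine B L' → L ≠ L' →
      ∀ x y : G, x ∈ L ∩ L' → y ∈ L ∩ L' → x = y) ∧
    (∀ x y : G, x ≠ y → ∃! L : Set G, IsLine B L ∧ x ∈ L ∧ y ∈ L) := by
  refine ⟨fun L L' hL hL' hne x y hx hy => ?_, fun x y => hmal.existsUnique_isLine hcover⟩
  by_contra hxy
  exact hne ((hmal.existsUnique_isLine hcover hxy).unique ⟨hL, hx.1, hy.1⟩ ⟨hL', hx.2, hy.2⟩)

theorem stmt_14 {G : Type*} [Group G] (B : Subgroup G)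
    (hB : B ≠ ⊥) (hmal : Malnormal B)
    (hcover : ∀ g : G, ∃ h : G, h⁻¹ * g * h ∈ B) :
    (∀ L L' : Set G, IsLine B L → IsLine B L' → L ≠ L' →
      ∀ x y : G, x ∈ L ∩ L' → y ∈ L ∩ L' → x = y) ∧
    (∀ x y : G, x ≠ y → ∃! L : Set G, IsLine B L ∧ x ∈ L ∧ y ∈ L) :=
  stmt_14_general B hmal hcover
end
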